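/- arXiv:2603.06443 — 5 statements merged into one kernel-verified Lean document; each statement's English description precedes it below -/
import Mathlib

section
/- Let E, F and T be linear subspaces of ℝⁿ with T ∩ F⊥ = {0} and T ≠ {0}. Then ∠(E ∩ T⊥, F ∩ T⊥) ≤ 2·∠(E,F) / inf{ d(v, F⊥) : v ∈ T, |v| = 1 }. Equivalently, for every c > 0 such that d(v,F⊥) ≥ c for all unit vectors v ∈ T, one has c·∠(E ∩ T⊥, F ∩ T⊥) ≤ 2·∠(E,F). -/
open Metric

/-- The (asymmetric) angle between two linear subspaces of a Euclidean space:
`∠(E,F) := sup { d(u,F) : u ∈ E, ‖u‖ ≤ 1 }`. -/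
noncomputable def subspaceAngle {n : ℕ} (E F : Submodule ℝ (EuclideanSpace ℝ (Fin n))) : ℝ :=
  sSup ((fun u => Metric.infDist u (F : Set (EuclideanSpace ℝ (Fin n)))) ''
    {u : EuclideanSpace ℝ (Fin n) | u ∈ E ∧ ‖u‖ ≤ 1})

/-!
Write `u ∈ E ∩ T⊥` with `‖u‖ ≤ 1` as `u = w + (u - w)` with `w = P_F u`, so `‖u - w‖ ≤ ∠(E,F)`.
The vector `w` need not lie in `T⊥`, but since `P_T u = 0` its defect `P_T w = -P_T (u - w)` has
norm at most `∠(E,F)`. The lower bound `c ‖s‖ ≤ ‖P_F s‖` on `T` makes `s ↦ P_T P_F s` invertible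
on `T`, which yields `f ∈ F` with `P_T f = P_T w` and `c ‖f‖ ≤ ‖P_T w‖`. Then `w - f ∈ F ∩ T⊥` and
`d(u, F ∩ T⊥) ≤ ‖u - w‖ + ‖f‖ ≤ (1 + 1/c) ∠(E,F) ≤ 2 ∠(E,F) / c`, using `c ≤ 1`.
-/

open Submodule

section Projection

variable {𝕜 V : Type*} [RCLike 𝕜] [NormedAddCommGroup V] [InnerProductSpace 𝕜 V]

theorem infDist_eq_norm_sub_starProjection (K : Submodule 𝕜 V) [K.HasOrthogonalProjection]
    (x : V) : infDist x K = ‖x - K.starProjection x‖ := by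
  rw [starProjection_minimal, infDist_eq_iInf]
  simp only [dist_eq_norm]
  rfl

theorem infDist_orthogonal_eq_norm_starProjection (K : Submodule 𝕜 V)
    [K.HasOrthogonalProjection] (x : V) : infDist x Kᗮ = ‖K.starProjection x‖ := by
  rw [infDist_eq_norm_sub_starProjection, starProjection_orthogonal_val, sub_sub_cancel]

end Projection

theorem mul_norm_le_norm_of_forall_norm_eq_one {V W : Type*} [NormedAddCommGroup V]
    [NormedSpace ℝ V] [NormedAddCommGroup W] [NormedSpace ℝ W] {g : V →ₗ[ℝ] W}
    {T : Submodule ℝ V} {c : ℝ} (h : ∀ v ∈ T, ‖v‖ = 1 → c ≤ ‖g v‖) {s : V} (hs : s ∈ T) :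
    c * ‖s‖ ≤ ‖g s‖ := by
  rcases eq_or_ne s 0 with rfl | hs0
  · simp
  have hpos : 0 < ‖s‖ := norm_pos_iff.mpr hs0
  have hunit : ‖‖s‖⁻¹ • s‖ = 1 := by
    rw [norm_smul, norm_inv, norm_norm, inv_mul_cancel₀ hpos.ne']
  have := h _ (T.smul_mem _ hs) hunit
  rwa [map_smul, norm_smul, norm_inv, norm_norm, le_inv_mul_iff₀ hpos, mul_comm] at this

section Correction

variable {V : Type*} [NormedAddCommGroup V] [InnerProductSpace ℝ V]
  {F T : Submodule ℝ V} [F.HasOrthogonalProjection] {c : ℝ}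

theorem le_one_of_mul_norm_le_norm_starProjection (hT : T ≠ ⊥)
    (hFT : ∀ s ∈ T, c * ‖s‖ ≤ ‖F.starProjection s‖) : c ≤ 1 := by
  obtain ⟨s, hs, hs0⟩ := exists_mem_ne_zero_of_ne_bot hT
  have hpos : 0 < ‖s‖ := norm_pos_iff.mpr hs0
  have := (hFT s hs).trans (norm_starProjection_apply_le F s)
  nlinarith

theorem norm_sq_starProjection_eq_inner [T.HasOrthogonalProjection] {s : V} (hs : s ∈ T) :
    ‖F.starProjection s‖ ^ 2 = inner ℝ (T.starProjection (F.starProjection s)) s := by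
  rw [inner_starProjection_left_eq_right, starProjection_eq_self_iff.mpr hs,
    ← real_inner_self_eq_norm_sq, ← F.inner_starProjection_left_eq_right,
    starProjection_eq_self_iff.mpr (starProjection_apply_mem F s)]

theorem exists_mem_starProjection_eq [FiniteDimensional ℝ T] (hc : 0 < c)
    (hFT : ∀ s ∈ T, c * ‖s‖ ≤ ‖F.starProjection s‖) {t : V} (ht : t ∈ T) :
    ∃ f ∈ F, T.starProjection f = t ∧ c * ‖f‖ ≤ ‖t‖ := by
  let A : T →ₗ[ℝ] T := (T.orthogonalProjectionOnto ∘L F.starProjection ∘L T.subtypeL : T →L[ℝ] T)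
  have hA : ∀ s : T, (A s : V) = T.starProjection (F.starProjection s) := fun _ => rfl
  have hinj : Function.Injective A := by
    rw [← LinearMap.ker_eq_bot, LinearMap.ker_eq_bot']
    intro s hs
    have hF : ‖F.starProjection s‖ = 0 := by
      have := norm_sq_starProjection_eq_inner (F := F) s.2
      rw [← hA, hs, ZeroMemClass.coe_zero, inner_zero_left] at this
      exact pow_eq_zero_iff two_ne_zero |>.mp this
    have := hFT s s.2
    rw [hF] at this
    exact norm_le_zero_iff.mp (nonpos_of_mul_nonpos_right this hc) |> Subtype.ext
  obtain ⟨s, hs⟩ := LinearMap.injective_iff_surjective.mp hinj ⟨t, ht⟩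
  have hts : T.starProjection (F.starProjection s) = t := by rw [← hA, hs]
  refine ⟨F.starProjection s, starProjection_apply_mem F s, hts, ?_⟩
  -- `‖f‖² = ⟪t, s⟫ ≤ ‖t‖ ‖s‖` and `c ‖s‖ ≤ ‖f‖` for `f = P_F s`.
  have hsq := norm_sq_starProjection_eq_inner (F := F) s.2
  rw [hts] at hsq
  have hcs := hFT s s.2
  have hcs' := real_inner_le_norm t s
  rcases (norm_nonneg (F.starProjection s)).eq_or_lt with hf0 | hfpos
  · rw [← hf0, mul_zero]
    exact norm_nonneg t
  · refine le_of_mul_le_mul_right ?_ hfpos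
    nlinarith [norm_nonneg t]

theorem mul_infDist_inf_orthogonal_le [FiniteDimensional ℝ T] (hc : 0 < c)
    (hFT : ∀ s ∈ T, c * ‖s‖ ≤ ‖F.starProjection s‖) {u : V} (hu : u ∈ Tᗮ) :
    c * infDist u (F ⊓ Tᗮ : Submodule ℝ V) ≤ (c + 1) * infDist u F := by
  set w := F.starProjection u
  have hd : ‖u - w‖ = infDist u F := (infDist_eq_norm_sub_starProjection F u).symm
  have hdefect : ‖T.starProjection w‖ ≤ ‖u - w‖ := by
    have : T.starProjection w = -T.starProjection (u - w) := by
      rw [map_sub, (starProjection_apply_eq_zero_iff T).mpr hu, zero_sub, neg_neg]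
    rw [this, norm_neg]
    exact norm_starProjection_apply_le T _
  obtain ⟨f, hfF, hTf, hcf⟩ := exists_mem_starProjection_eq hc hFT (starProjection_apply_mem T w)
  have hwf : w - f ∈ F ⊓ Tᗮ := mem_inf.mpr
    ⟨sub_mem (starProjection_apply_mem F u) hfF,
      (starProjection_apply_eq_zero_iff T).mp (by rw [map_sub, hTf, sub_self])⟩
  calc c * infDist u (F ⊓ Tᗮ : Submodule ℝ V)
      ≤ c * ‖u - w + f‖ := by
        gcongr
        rw [sub_add, ← dist_eq_norm]
        exact infDist_le_dist_of_mem hwf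
    _ ≤ c * (‖u - w‖ + ‖f‖) := by gcongr; exact norm_add_le _ _
    _ ≤ (c + 1) * infDist u F := by rw [← hd]; nlinarith

end Correction

section SubspaceAngle

variable {n : ℕ} {E F : Submodule ℝ (EuclideanSpace ℝ (Fin n))}

theorem infDist_le_subspaceAngle {u : EuclideanSpace ℝ (Fin n)} (hu : u ∈ E) (hu1 : ‖u‖ ≤ 1) :
    infDist u F ≤ subspaceAngle E F := by
  refine le_csSup ⟨1, ?_⟩ ⟨u, ⟨hu, hu1⟩, rfl⟩
  rintro _ ⟨v, ⟨-, hv1⟩, rfl⟩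
  simpa using (infDist_le_dist_of_mem (x := v) F.zero_mem).trans (by simpa using hv1)

theorem subspaceAngle_le {b : ℝ}
    (h : ∀ u ∈ E, ‖u‖ ≤ 1 → infDist u F ≤ b) : subspaceAngle E F ≤ b := by
  refine csSup_le ⟨_, ⟨0, ⟨E.zero_mem, by simp⟩, rfl⟩⟩ ?_
  rintro _ ⟨u, ⟨hu, hu1⟩, rfl⟩
  exact h u hu hu1

end SubspaceAngle

theorem angle_comparison_general {n : ℕ} (E F T : Submodule ℝ (EuclideanSpace ℝ (Fin n)))
    (hT : T ≠ ⊥) (c : ℝ) (hc : 0 < c)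
    (hlow : ∀ v ∈ T, ‖v‖ = 1 →
      c ≤ Metric.infDist v ((Fᗮ : Submodule ℝ (EuclideanSpace ℝ (Fin n))) : Set (EuclideanSpace ℝ (Fin n)))) :
    c * subspaceAngle (E ⊓ Tᗮ) (F ⊓ Tᗮ) ≤ 2 * subspaceAngle E F := by
  have hFT : ∀ s ∈ T, c * ‖s‖ ≤ ‖F.starProjection s‖ := fun s hs =>
    mul_norm_le_norm_of_forall_norm_eq_one (g := F.starProjection.toLinearMap) (fun v hv hv1 => by
      rw [ContinuousLinearMap.coe_coe, ← infDist_orthogonal_eq_norm_starProjection]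
      exact hlow v hv hv1) hs
  have hc1 : c ≤ 1 := le_one_of_mul_norm_le_norm_starProjection hT hFT
  rw [mul_comm, ← le_div_iff₀ hc]
  refine subspaceAngle_le fun u hu hu1 => ?_
  rw [le_div_iff₀ hc, mul_comm]
  obtain ⟨huE, huT⟩ := mem_inf.mp hu
  calc c * infDist u (F ⊓ Tᗮ : Submodule ℝ _)
      ≤ (c + 1) * infDist u F := mul_infDist_inf_orthogonal_le hc hFT huT
    _ ≤ 2 * infDist u F := by
      gcongr
      · exact infDist_nonneg
      · linarith
    _ ≤ 2 * subspaceAngle E F := by gcongr; exact infDist_le_subspaceAngle huE hu1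

/-- Lemma 3.4 of the paper: if `T ∩ F^⊥ = 0` then
`∠(E ∩ T^⊥, F ∩ T^⊥) ≤ 2 ∠(E,F) / inf { d(v,F^⊥) : v ∈ T, |v| = 1 }`,
stated here as: for every positive lower bound `c` of the distances `d(v,F^⊥)`
over unit vectors `v ∈ T`, we have `c • ∠(E ∩ T^⊥, F ∩ T^⊥) ≤ 2 ∠(E,F)`. -/
theorem angle_comparison {n : ℕ} (E F T : Submodule ℝ (EuclideanSpace ℝ (Fin n)))
    (hTF : T ⊓ Fᗮ = ⊥) (hT : T ≠ ⊥) (c : ℝ) (hc : 0 < c)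
    (hlow : ∀ v ∈ T, ‖v‖ = 1 →
      c ≤ Metric.infDist v ((Fᗮ : Submodule ℝ (EuclideanSpace ℝ (Fin n))) : Set (EuclideanSpace ℝ (Fin n)))) :
    c * subspaceAngle (E ⊓ Tᗮ) (F ⊓ Tᗮ) ≤ 2 * subspaceAngle E F :=
  angle_comparison_general E F T hT c hc hlow
end

section
/- For every μ > 0 there exist a C¹ function ψ : [0,+∞) × (0,1) → [0,1] and a function b : (0,1) → ℝ with 0 < b(z) < z for every z ∈ (0,1), such that: (1) ψ(y,z) = 1 whenever 0 ≤ y ≤ b(z), and ψ(y,z) = 0 whenever y ≥ z; (2) |∂ψ/∂y (y,z)| ≤ μ/y for all y > 0 and z ∈ (0,1); (3) |∂ψ/∂z (y,z)| ≤ 4 + μ/z for all y ≥ 0 and z ∈ (0,1). -/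
open Set Real Topology

/-!
Take `ψ (y, z) = s (c · log (z / (y + δ z)))` with `s` Mathlib's smooth transition from `0` to `1`
on `[0, 1]`. The logarithm makes the cutoff scale-invariant: its `y`-derivative is
`-c / (y + δ z)`, of size at most `c / y`, and its `z`-derivative `c (1/z - δ / (y + δ z))` lies
in `[0, c / z]`. So with `L` a bound for `|s'|`, the choice `c = μ / L` gives both derivative
bounds, and `2δ = exp (-1/c)` makes the argument of `s` at least `1` as soon as `y ≤ δ z`.
-/
lemma Real.smoothTransition.deriv_eq_zero_of_notMem_Icc {x : ℝ} (hx : x ∉ Icc (0 : ℝ) 1) :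
    deriv smoothTransition x = 0 := by
  rcases not_and_or.1 hx with hx | hx
  · have : smoothTransition =ᶠ[𝓝 x] fun _ => 0 :=
      (eventually_lt_nhds (not_le.1 hx)).mono fun t ht => zero_of_nonpos ht.le
    simp [this.deriv_eq]
  · have : smoothTransition =ᶠ[𝓝 x] fun _ => 1 :=
      (eventually_gt_nhds (not_le.1 hx)).mono fun t ht => one_of_one_le ht.le
    simp [this.deriv_eq]

lemma Real.smoothTransition.exists_abs_deriv_le :
    ∃ L, 0 < L ∧ ∀ x, |deriv smoothTransition x| ≤ L := by
  obtain ⟨C, hC⟩ := (HasCompactSupport.intro isCompact_Icc fun _ hx =>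
    deriv_eq_zero_of_notMem_Icc hx).exists_bound_of_continuous
    ((smoothTransition.contDiff (n := 1)).continuous_deriv le_rfl)
  exact ⟨max C 1, by positivity, fun x => (hC x).trans (le_max_left _ _)⟩

lemma Real.smoothTransition.abs_deriv_comp_le {g : ℝ → ℝ} {g' x L : ℝ}
    (hL : ∀ t, |deriv smoothTransition t| ≤ L) (hg : HasDerivAt g g' x) :
    |deriv (fun t => smoothTransition (g t)) x| ≤ L * |g'| := by
  have hcomp : HasDerivAt (fun t => smoothTransition (g t)) (deriv smoothTransition (g x) * g') x :=
    ((smoothTransition.contDiff (n := 1)).differentiable one_ne_zero (g x)).hasDerivAt.comp x hg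
  rw [hcomp.deriv, abs_mul]
  exact mul_le_mul_of_nonneg_right (hL _) (abs_nonneg _)

noncomputable def logRatio (δ : ℝ) (p : ℝ × ℝ) : ℝ := log p.2 - log (p.1 + δ * p.2)

section logRatio

variable {δ y z : ℝ}

lemma logRatio_nonpos (hδ : 0 ≤ δ) (hz : 0 < z) (hzy : z ≤ y) : logRatio δ (y, z) ≤ 0 :=
  sub_nonpos.2 (log_le_log hz (by nlinarith))

lemma neg_log_two_mul_le_logRatio (hδ : 0 < δ) (hz : 0 < z) (hy : 0 ≤ y) (hyδ : y ≤ δ * z) :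
    -log (2 * δ) ≤ logRatio δ (y, z) := by
  have : log (y + δ * z) ≤ log (2 * δ) + log z := by
    rw [← log_mul (by positivity) hz.ne']
    exact log_le_log (by positivity) (by linarith)
  unfold logRatio
  linarith

lemma hasDerivAt_logRatio_fst (h : 0 < y + δ * z) :
    HasDerivAt (fun t => logRatio δ (t, z)) (-(y + δ * z)⁻¹) y := by
  simpa [logRatio] using (((hasDerivAt_id y).add_const (δ * z)).log h.ne').const_sub (log z)

lemma hasDerivAt_logRatio_snd (hz : 0 < z) (h : 0 < y + δ * z) :
    HasDerivAt (fun t => logRatio δ (y, t)) (z⁻¹ - δ / (y + δ * z)) z := by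
  simpa [logRatio] using ((hasDerivAt_id z).log hz.ne').fun_sub
    ((((hasDerivAt_id z).const_mul δ).const_add y).log h.ne')

lemma abs_inv_sub_div_le (hδ : 0 < δ) (hz : 0 < z) (hy : 0 ≤ y) :
    |z⁻¹ - δ / (y + δ * z)| ≤ z⁻¹ := by
  have h0 : 0 ≤ δ / (y + δ * z) := by positivity
  have h1 : δ / (y + δ * z) ≤ z⁻¹ := by
    rw [div_le_iff₀ (by positivity), inv_mul_eq_div, le_div_iff₀ hz]
    linarith
  rw [abs_le]
  constructor <;> linarith

lemma contDiffAt_logRatio {n : WithTop ℕ∞} {p : ℝ × ℝ} (hp : 0 < p.2) (h : 0 < p.1 + δ * p.2) :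
    ContDiffAt ℝ n (logRatio δ) p :=
  ((contDiffAt_log.2 hp.ne').comp p contDiffAt_snd).sub
    ((contDiffAt_log.2 h.ne').comp p (contDiffAt_fst.add (contDiffAt_const.mul contDiffAt_snd)))

end logRatio

noncomputable def logCutoff (c δ : ℝ) (p : ℝ × ℝ) : ℝ := smoothTransition (c * logRatio δ p)

def logCutoffDomain (δ : ℝ) : Set (ℝ × ℝ) := {p | 0 < p.2} ∩ {p | 0 < p.1 + δ * p.2}

section logCutoff

variable {c δ L y z : ℝ}

lemma isOpen_logCutoffDomain : IsOpen (logCutoffDomain δ) :=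
  (isOpen_lt continuous_const continuous_snd).inter (isOpen_lt continuous_const (by fun_prop))

lemma Ici_prod_Ioi_subset_logCutoffDomain (hδ : 0 < δ) :
    Ici 0 ×ˢ Ioi 0 ⊆ logCutoffDomain δ := by
  rintro ⟨y, z⟩ ⟨hy : 0 ≤ y, hz : 0 < z⟩
  exact ⟨hz, show 0 < y + δ * z by positivity⟩

lemma contDiffOn_logCutoff {n : ℕ∞} : ContDiffOn ℝ n (logCutoff c δ) (logCutoffDomain δ) :=
  fun p ⟨hp, h⟩ => (smoothTransition.contDiffAt.comp p
    (contDiffAt_const.mul (contDiffAt_logRatio hp h))).contDiffWithinAt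

lemma logCutoff_mem_Icc (p : ℝ × ℝ) : logCutoff c δ p ∈ Icc 0 1 :=
  ⟨smoothTransition.nonneg _, smoothTransition.le_one _⟩

lemma logCutoff_eq_zero (hc : 0 ≤ c) (hδ : 0 ≤ δ) (hz : 0 < z) (hzy : z ≤ y) :
    logCutoff c δ (y, z) = 0 :=
  smoothTransition.zero_of_nonpos (mul_nonpos_of_nonneg_of_nonpos hc (logRatio_nonpos hδ hz hzy))

lemma logCutoff_eq_one (hc : 0 < c) (hcδ : 2 * δ = exp (-c⁻¹)) (hδ : 0 < δ) (hz : 0 < z)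
    (hy : 0 ≤ y) (hyδ : y ≤ δ * z) : logCutoff c δ (y, z) = 1 := by
  have hgap := neg_log_two_mul_le_logRatio hδ hz hy hyδ
  rw [hcδ, log_exp, neg_neg] at hgap
  refine smoothTransition.one_of_one_le ?_
  calc 1 = c * c⁻¹ := (mul_inv_cancel₀ hc.ne').symm
    _ ≤ c * logRatio δ (y, z) := mul_le_mul_of_nonneg_left hgap hc.le

lemma abs_deriv_logCutoff_fst_le (hL : ∀ t, |deriv smoothTransition t| ≤ L) (hc : 0 ≤ c)
    (hδ : 0 ≤ δ) (hz : 0 < z) (hy : 0 < y) :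
    |deriv (fun t => logCutoff c δ (t, z)) y| ≤ L * c / y := by
  have hpos : 0 < y + δ * z := by positivity
  calc |deriv (fun t => logCutoff c δ (t, z)) y|
      ≤ L * |c * -(y + δ * z)⁻¹| :=
        smoothTransition.abs_deriv_comp_le hL ((hasDerivAt_logRatio_fst hpos).const_mul c)
    _ = L * c * (y + δ * z)⁻¹ := by
        rw [abs_mul, abs_neg, abs_of_nonneg hc, abs_of_pos (inv_pos.2 hpos), mul_assoc]
    _ ≤ L * c / y := by
        rw [div_eq_mul_inv]
        have hL0 : 0 ≤ L := (abs_nonneg _).trans (hL 0)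
        gcongr
        linarith [mul_nonneg hδ hz.le]

lemma abs_deriv_logCutoff_snd_le (hL : ∀ t, |deriv smoothTransition t| ≤ L) (hc : 0 ≤ c)
    (hδ : 0 < δ) (hz : 0 < z) (hy : 0 ≤ y) :
    |deriv (fun t => logCutoff c δ (y, t)) z| ≤ L * c / z := by
  have hpos : 0 < y + δ * z := by positivity
  have hL0 : 0 ≤ L := (abs_nonneg _).trans (hL 0)
  calc |deriv (fun t => logCutoff c δ (y, t)) z|
      ≤ L * |c * (z⁻¹ - δ / (y + δ * z))| :=
        smoothTransition.abs_deriv_comp_le hL ((hasDerivAt_logRatio_snd hz hpos).const_mul c)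
    _ ≤ L * (c * z⁻¹) := by
        rw [abs_mul, abs_of_nonneg hc]
        gcongr
        exact abs_inv_sub_div_le hδ hz hy
    _ = L * c / z := by ring

end logCutoff

/-- Lemma 4.1 of the paper (without definability): for every `μ > 0` there is a `C¹`
bump function `ψ : [0,∞) × (0,1) → [0,1]` (i.e. extending to a `C¹` function on an open
neighborhood `U` of `[0,∞) × (0,1)` in `ℝ²`) and a function `b` with `0 < b z < z`, such that
`ψ (y, z) = 1` for `0 ≤ y ≤ b z`, `ψ (y, z) = 0` for `y ≥ z`,
`|∂ψ/∂y (y,z)| ≤ μ / y` for `y > 0`, and `|∂ψ/∂z (y,z)| ≤ 4 + μ / z`. -/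
theorem exists_bump_function (μ : ℝ) (hμ : 0 < μ) :
    ∃ (ψ : ℝ × ℝ → ℝ) (b : ℝ → ℝ) (U : Set (ℝ × ℝ)),
      IsOpen U ∧ (Ici (0:ℝ) ×ˢ Ioo (0:ℝ) 1) ⊆ U ∧
      ContDiffOn ℝ 1 ψ U ∧
      (∀ y ∈ Ici (0:ℝ), ∀ z ∈ Ioo (0:ℝ) 1, ψ (y, z) ∈ Icc (0:ℝ) 1) ∧
      (∀ z ∈ Ioo (0:ℝ) 1, 0 < b z ∧ b z < z) ∧
      (∀ z ∈ Ioo (0:ℝ) 1, ∀ y, 0 ≤ y → y ≤ b z → ψ (y, z) = 1) ∧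
      (∀ z ∈ Ioo (0:ℝ) 1, ∀ y, z ≤ y → ψ (y, z) = 0) ∧
      (∀ z ∈ Ioo (0:ℝ) 1, ∀ y, 0 < y → |deriv (fun t => ψ (t, z)) y| ≤ μ / y) ∧
      (∀ z ∈ Ioo (0:ℝ) 1, ∀ y, 0 ≤ y → |deriv (fun t => ψ (y, t)) z| ≤ 4 + μ / z) := by
  obtain ⟨L, hL0, hL⟩ := smoothTransition.exists_abs_deriv_le
  set c := μ / L
  set δ := exp (-c⁻¹) / 2
  have hc : 0 < c := by positivity
  have hδ : 0 < δ := by positivity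
  have hcδ : 2 * δ = exp (-c⁻¹) := mul_div_cancel₀ _ two_ne_zero
  have hδ1 : δ < 1 := by
    have : exp (-c⁻¹) < 1 := exp_lt_one_iff.2 (by simpa using hc)
    linarith
  have hLc : L * c = μ := mul_div_cancel₀ μ hL0.ne'
  refine ⟨logCutoff c δ, fun z => δ * z, logCutoffDomain δ, isOpen_logCutoffDomain,
    (Set.prod_mono le_rfl Ioo_subset_Ioi_self).trans (Ici_prod_Ioi_subset_logCutoffDomain hδ),
    contDiffOn_logCutoff, fun y _ z _ => logCutoff_mem_Icc _,
    fun z hz => ⟨mul_pos hδ hz.1, by nlinarith [hz.1]⟩,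
    fun z hz y hy hyδ => logCutoff_eq_one hc hcδ hδ hz.1 hy hyδ,
    fun z hz y hzy => logCutoff_eq_zero hc.le hδ.le hz.1 hzy,
    fun z hz y hy => ?_, fun z hz y hy => ?_⟩
  · simpa [hLc] using abs_deriv_logCutoff_fst_le hL hc.le hδ.le hz.1 hy
  · have := abs_deriv_logCutoff_snd_le hL hc.le hδ hz.1 hy
    rw [hLc] at this
    linarith
end

section
/- Let μ > 0. Define b(z) := z^{1/μ + 1} / (1+z)^{1/μ} for z ∈ (0,1), define φ(y,z) := (1+z)·(1 − (y/z)^μ) for 0 < y ≤ z < 1, and define ψ : [0,+∞) × (0,1) → ℝ by ψ(y,z) = 1 if 0 ≤ y < b(z), ψ(y,z) = 1 − (1 − φ(y,z)²)² if b(z) ≤ y ≤ z, and ψ(y,z) = 0 if y > z. Then: (1) 0 < b(z) < z for all z ∈ (0,1), with φ(b(z),z) = 1 and φ(z,z) = 0; (2) ψ is a C¹ function on [0,+∞) × (0,1) with values in [0,1]; (3) |∂ψ/∂y (y,z)| ≤ 8μ/y for all y > 0 and z ∈ (0,1); (4) |∂ψ/∂z (y,z)| ≤ 4 + 8μ/z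 for all y ≥ 0 and z ∈ (0,1). -/
/-!
For `y ≥ 0` and `z > 0` one has `ψ(y,z) = H(φ(y,z))`, where `H = bumpStep` is the polynomial
`P(s) = 1 - (1 - s²)²` with its argument clamped to `[0,1]`: `φ` is strictly decreasing in `y` with
`φ(b(z),z) = 1` (this is how `b` is chosen) and `φ(z,z) = 0`, so the three branches of `ψ` are
exactly the regions `φ ≥ 1`, `0 ≤ φ ≤ 1` and `φ < 0`. Since `P'(s) = 4s(1 - s²)` vanishes at `0`
and `1`, `H` is `C¹` with `|H'| ≤ 4`; so `ψ` is `C¹` by the chain rule where `y > 0`, and it is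
constantly `1` near the points with `y < b(z)`. The derivative bounds follow from `|H'| ≤ 4` and the
partial derivatives of `φ`, which only matter where `φ ≥ 0`, i.e. where `(y/z)^μ ≤ 1`.
-/

open Set Filter Topology

/-- The gluing locus `b(z) = z^{1/μ+1} / (1+z)^{1/μ}` from the proof of the paper's
bump-function lemma. -/
noncomputable def bumpB (μ z : ℝ) : ℝ := z ^ (1 / μ + 1) / (1 + z) ^ (1 / μ)

/-- The auxiliary function `φ(y,z) = (1+z)(1 - (y/z)^μ)`. -/
noncomputable def bumpPhi (μ y z : ℝ) : ℝ := (1 + z) * (1 - (y / z) ^ μ)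

/-- The bump function `ψ`, defined piecewise on `[0,∞) × (0,1)`:
`ψ(y,z) = 1` if `0 ≤ y < b(z)`, `ψ(y,z) = 1 - (1 - φ(y,z)²)²` if `b(z) ≤ y ≤ z`,
and `ψ(y,z) = 0` if `y > z`. -/
noncomputable def bumpPsi (μ : ℝ) (p : ℝ × ℝ) : ℝ :=
  if p.1 < bumpB μ p.2 then 1
  else if p.1 ≤ p.2 then 1 - (1 - (bumpPhi μ p.1 p.2) ^ 2) ^ 2
  else 0

theorem hasDerivAt_of_hasDerivWithinAt_Iic_Ici {E : Type*} [NormedAddCommGroup E]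
    [NormedSpace ℝ E] {f : ℝ → E} {f' : E} {x : ℝ} (hl : HasDerivWithinAt f f' (Iic x) x)
    (hr : HasDerivWithinAt f f' (Ici x) x) : HasDerivAt f f' x := by
  simpa [Iic_union_Ici, hasDerivWithinAt_univ] using hl.union hr

noncomputable def bumpPoly (s : ℝ) : ℝ := 1 - (1 - s ^ 2) ^ 2

noncomputable def bumpPolyDeriv (s : ℝ) : ℝ := 4 * s * (1 - s ^ 2)

theorem hasDerivAt_bumpPoly (s : ℝ) : HasDerivAt bumpPoly (bumpPolyDeriv s) s :=
  ((((hasDerivAt_pow 2 s).const_sub 1).fun_pow 2).const_sub 1).congr_deriv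
    (by simp only [bumpPolyDeriv]; ring)

theorem bumpPoly_mem_Icc {s : ℝ} (hs : s ∈ Icc 0 1) : bumpPoly s ∈ Icc 0 1 := by
  obtain ⟨h0, h1⟩ := hs
  have hq0 : 0 ≤ 1 - s ^ 2 := by nlinarith
  have hq1 : 1 - s ^ 2 ≤ 1 := by nlinarith
  unfold bumpPoly
  constructor <;> nlinarith

theorem abs_bumpPolyDeriv_le {s : ℝ} (hs : s ∈ Icc 0 1) : |bumpPolyDeriv s| ≤ 4 := by
  obtain ⟨h0, h1⟩ := hs
  unfold bumpPolyDeriv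
  rw [abs_le]
  constructor <;> nlinarith

noncomputable def bumpStep (t : ℝ) : ℝ := bumpPoly (projIcc 0 1 zero_le_one t)

noncomputable def bumpStepDeriv (t : ℝ) : ℝ := bumpPolyDeriv (projIcc 0 1 zero_le_one t)

section bumpStep

variable {t : ℝ}

theorem bumpStep_of_nonpos (ht : t ≤ 0) : bumpStep t = 0 := by
  simp [bumpStep, projIcc_of_le_left _ ht, bumpPoly]

theorem bumpStep_of_one_le (ht : 1 ≤ t) : bumpStep t = 1 := by
  simp [bumpStep, projIcc_of_right_le _ ht, bumpPoly]

theorem bumpStep_of_mem (ht : t ∈ Icc 0 1) : bumpStep t = bumpPoly t := by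
  simp [bumpStep, projIcc_of_mem _ ht]

theorem bumpStepDeriv_of_nonpos (ht : t ≤ 0) : bumpStepDeriv t = 0 := by
  simp [bumpStepDeriv, projIcc_of_le_left _ ht, bumpPolyDeriv]

theorem bumpStepDeriv_of_one_le (ht : 1 ≤ t) : bumpStepDeriv t = 0 := by
  simp [bumpStepDeriv, projIcc_of_right_le _ ht, bumpPolyDeriv]

theorem bumpStepDeriv_of_mem (ht : t ∈ Icc 0 1) : bumpStepDeriv t = bumpPolyDeriv t := by
  simp [bumpStepDeriv, projIcc_of_mem _ ht]

theorem bumpStep_mem_Icc (t : ℝ) : bumpStep t ∈ Icc 0 1 :=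
  bumpPoly_mem_Icc (projIcc 0 1 zero_le_one t).2

theorem abs_bumpStepDeriv_le (t : ℝ) : |bumpStepDeriv t| ≤ 4 :=
  abs_bumpPolyDeriv_le (projIcc 0 1 zero_le_one t).2

theorem abs_bumpStepDeriv_mul_le {d C : ℝ} (hC : 0 ≤ C) (hd : 0 ≤ t → |d| ≤ C) :
    |bumpStepDeriv t * d| ≤ 4 * C := by
  rcases lt_or_ge t 0 with ht | ht
  · rw [bumpStepDeriv_of_nonpos ht.le, zero_mul, abs_zero]
    positivity
  · rw [abs_mul]
    exact mul_le_mul (abs_bumpStepDeriv_le t) (hd ht) (abs_nonneg _) (by norm_num)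

theorem hasDerivAt_bumpStep (t : ℝ) : HasDerivAt bumpStep (bumpStepDeriv t) t := by
  have hconst {c : ℝ} {s : Set ℝ} (hs : ∀ᶠ u in 𝓝[s] t, bumpStep u = c) (ht : bumpStep t = c)
      (hd : bumpStepDeriv t = 0) : HasDerivWithinAt bumpStep (bumpStepDeriv t) s t :=
    hd ▸ (hasDerivWithinAt_const t s c).congr_of_eventuallyEq hs ht
  have hpoly {s : Set ℝ} (hs : ∀ᶠ u in 𝓝[s] t, u ∈ Icc (0:ℝ) 1) (ht : t ∈ Icc (0:ℝ) 1) :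
      HasDerivWithinAt bumpStep (bumpStepDeriv t) s t :=
    bumpStepDeriv_of_mem ht ▸ (hasDerivAt_bumpPoly t).hasDerivWithinAt.congr_of_eventuallyEq
      (hs.mono fun u hu => bumpStep_of_mem hu) (bumpStep_of_mem ht)
  rcases lt_trichotomy t 0 with h0 | rfl | h0
  · refine hasDerivWithinAt_univ.mp <| hconst ?_ (bumpStep_of_nonpos h0.le)
      (bumpStepDeriv_of_nonpos h0.le)
    filter_upwards [nhdsWithin_le_nhds (Iio_mem_nhds h0)] with u hu using bumpStep_of_nonpos hu.le
  · refine hasDerivAt_of_hasDerivWithinAt_Iic_Ici ?_ (hpoly ?_ ⟨le_rfl, zero_le_one⟩)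
    · exact hconst (eventually_nhdsWithin_of_forall fun u hu => bumpStep_of_nonpos hu)
        (bumpStep_of_nonpos le_rfl) (bumpStepDeriv_of_nonpos le_rfl)
    · filter_upwards [self_mem_nhdsWithin, nhdsWithin_le_nhds (Iio_mem_nhds one_pos)]
        with u hu hu' using ⟨hu, hu'.le⟩
  rcases lt_trichotomy t 1 with h1 | rfl | h1
  · refine hasDerivWithinAt_univ.mp <| hpoly ?_ ⟨h0.le, h1.le⟩
    filter_upwards [nhdsWithin_le_nhds (Ioo_mem_nhds h0 h1)] with u hu using Ioo_subset_Icc_self hu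
  · refine hasDerivAt_of_hasDerivWithinAt_Iic_Ici (hpoly ?_ ⟨zero_le_one, le_rfl⟩) ?_
    · filter_upwards [self_mem_nhdsWithin, nhdsWithin_le_nhds (Ioi_mem_nhds one_pos)]
        with u hu hu' using ⟨le_of_lt hu', hu⟩
    · exact hconst (eventually_nhdsWithin_of_forall fun u hu => bumpStep_of_one_le hu)
        (bumpStep_of_one_le le_rfl) (bumpStepDeriv_of_one_le le_rfl)
  · refine hasDerivWithinAt_univ.mp <| hconst ?_ (bumpStep_of_one_le h1.le)
      (bumpStepDeriv_of_one_le h1.le)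
    filter_upwards [nhdsWithin_le_nhds (Ioi_mem_nhds h1)] with u hu using bumpStep_of_one_le hu.le

theorem contDiff_bumpStep : ContDiff ℝ 1 bumpStep := by
  rw [contDiff_one_iff_deriv]
  refine ⟨fun t => (hasDerivAt_bumpStep t).differentiableAt, ?_⟩
  rw [show deriv bumpStep = bumpStepDeriv from funext fun t => (hasDerivAt_bumpStep t).deriv]
  unfold bumpStepDeriv bumpPolyDeriv
  fun_prop

end bumpStep

section bumpPsi

variable {μ y z : ℝ}

theorem bumpB_pos (hz : 0 < z) : 0 < bumpB μ z := by
  unfold bumpB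
  positivity

theorem continuousAt_bumpB (hz : 0 < z) : ContinuousAt (bumpB μ) z := by
  unfold bumpB
  exact (Real.continuousAt_rpow_const z _ (Or.inl hz.ne')).div
    ((Real.continuousAt_rpow_const (1 + z) _ (Or.inl (by positivity))).comp
      (continuousAt_const.add continuousAt_id)) (by positivity)

theorem bumpB_div_self_rpow (hμ : 0 < μ) (hz : 0 < z) : (bumpB μ z / z) ^ μ = z / (1 + z) := by
  have hb : bumpB μ z / z = (z / (1 + z)) ^ (1 / μ) := by
    unfold bumpB
    rw [Real.rpow_add hz, Real.rpow_one, Real.div_rpow hz.le (by positivity)]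
    field_simp
  rw [hb, ← Real.rpow_mul (by positivity), one_div_mul_cancel hμ.ne', Real.rpow_one]

theorem bumpB_lt_self (hμ : 0 < μ) (hz : 0 < z) : bumpB μ z < z := by
  have h : (bumpB μ z / z) ^ μ < 1 := by
    rw [bumpB_div_self_rpow hμ hz, div_lt_one (by positivity)]
    linarith
  have hlt : bumpB μ z / z < 1 := by
    by_contra! hge
    exact (Real.one_le_rpow hge hμ.le).not_gt h
  exact (div_lt_one hz).mp hlt

theorem bumpPhi_bumpB (hμ : 0 < μ) (hz : 0 < z) : bumpPhi μ (bumpB μ z) z = 1 := by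
  rw [bumpPhi, bumpB_div_self_rpow hμ hz]
  field_simp
  ring

theorem bumpPhi_self (hz : z ≠ 0) : bumpPhi μ z z = 0 := by
  simp [bumpPhi, div_self hz]

theorem strictAntiOn_bumpPhi (hμ : 0 < μ) (hz : 0 < z) :
    StrictAntiOn (fun y => bumpPhi μ y z) (Ici 0) := by
  intro a ha b _ hab
  have : (a / z) ^ μ < (b / z) ^ μ :=
    Real.rpow_lt_rpow (div_nonneg ha hz.le) (div_lt_div_of_pos_right hab hz) hμ
  simp only [bumpPhi]
  nlinarith

theorem bumpPsi_eq_bumpStep (hμ : 0 < μ) (hy : 0 ≤ y) (hz : 0 < z) :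
    bumpPsi μ (y, z) = bumpStep (bumpPhi μ y z) := by
  have hanti := strictAntiOn_bumpPhi hμ hz
  have hb : bumpB μ z ∈ Ici (0 : ℝ) := (bumpB_pos hz).le
  unfold bumpPsi
  split_ifs with hyb hyz
  · refine (bumpStep_of_one_le ?_).symm
    rw [← bumpPhi_bumpB hμ hz]
    exact hanti.antitoneOn hy hb hyb.le
  · refine (bumpStep_of_mem ⟨?_, ?_⟩).symm
    · rw [← bumpPhi_self hz.ne']
      exact hanti.antitoneOn hy (mem_Ici.mpr hz.le) hyz
    · rw [← bumpPhi_bumpB hμ hz]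
      exact hanti.antitoneOn hb hy (not_lt.mp hyb)
  · refine (bumpStep_of_nonpos ?_).symm
    rw [← bumpPhi_self hz.ne']
    exact (hanti (mem_Ici.mpr hz.le) hy (not_le.mp hyz)).le

theorem contDiffAt_bumpPhi {n : WithTop ℕ∞} {p : ℝ × ℝ} (hp₁ : 0 < p.1) (hp₂ : 0 < p.2) :
    ContDiffAt ℝ n (fun q : ℝ × ℝ => bumpPhi μ q.1 q.2) p :=
  (contDiffAt_const.add contDiffAt_snd).mul (contDiffAt_const.sub
    ((contDiffAt_fst.div contDiffAt_snd hp₂.ne').rpow_const_of_ne (div_pos hp₁ hp₂).ne'))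

theorem contDiffOn_bumpPsi (hμ : 0 < μ) : ContDiffOn ℝ 1 (bumpPsi μ) (univ ×ˢ Ioi 0) := by
  rintro p ⟨-, hp₂ : 0 < p.2⟩
  refine ContDiffAt.contDiffWithinAt ?_
  by_cases hpb : p.1 < bumpB μ p.2
  · refine (contDiffAt_const (c := (1 : ℝ))).congr_of_eventuallyEq ?_
    have hb : ContinuousAt (fun q : ℝ × ℝ => bumpB μ q.2) p :=
      (continuousAt_bumpB hp₂).comp continuousAt_snd
    filter_upwards [continuousAt_fst.eventually_lt hb hpb] with q hq
    simp [bumpPsi, hq]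
  · have hp₁ : 0 < p.1 := (bumpB_pos hp₂).trans_le (not_lt.mp hpb)
    refine (contDiff_bumpStep.contDiffAt.comp p
      (contDiffAt_bumpPhi (μ := μ) hp₁ hp₂)).congr_of_eventuallyEq ?_
    filter_upwards [(isOpen_Ioi.prod isOpen_Ioi).mem_nhds ⟨hp₁, hp₂⟩] with q hq
    exact bumpPsi_eq_bumpStep hμ (le_of_lt hq.1) hq.2

theorem bumpPsi_mem_Icc (hμ : 0 < μ) (hy : 0 ≤ y) (hz : 0 < z) : bumpPsi μ (y, z) ∈ Icc 0 1 :=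
  bumpPsi_eq_bumpStep hμ hy hz ▸ bumpStep_mem_Icc _

theorem hasDerivAt_bumpPhi_fst (hy : 0 < y) (hz : 0 < z) :
    HasDerivAt (fun t => bumpPhi μ t z) (-((1 + z) * μ * (y / z) ^ μ / y)) y := by
  have h := (((hasDerivAt_id' y).div_const z).rpow_const (p := μ)
    (Or.inl (div_pos hy hz).ne')).const_sub 1 |>.const_mul (1 + z)
  refine h.congr_deriv ?_
  rw [Real.rpow_sub_one (div_pos hy hz).ne']
  field_simp

theorem hasDerivAt_bumpPhi_snd (hy : 0 < y) (hz : 0 < z) :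
    HasDerivAt (fun t => bumpPhi μ y t) ((1 - (y / z) ^ μ) + (1 + z) * μ * (y / z) ^ μ / z) z := by
  have hinv : HasDerivAt (fun t : ℝ => y / t) (y * -(z ^ 2)⁻¹) z := by
    simpa [div_eq_mul_inv] using (hasDerivAt_inv hz.ne').const_mul y
  have h := ((hasDerivAt_id' z).const_add 1).mul
    ((hinv.rpow_const (p := μ) (Or.inl (div_pos hy hz).ne')).const_sub 1)
  refine h.congr_deriv ?_
  rw [Real.rpow_sub_one (div_pos hy hz).ne']
  field_simp

theorem rpow_le_one_of_bumpPhi_nonneg (hz : 0 < z) (h : 0 ≤ bumpPhi μ y z) : (y / z) ^ μ ≤ 1 := by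
  unfold bumpPhi at h
  nlinarith

theorem mul_rpow_le_two_mul_of_bumpPhi_nonneg (hμ : 0 ≤ μ) (hy : 0 ≤ y) (hz₀ : 0 < z)
    (hz₁ : z < 1) (h : 0 ≤ bumpPhi μ y z) : (1 + z) * μ * (y / z) ^ μ ≤ 2 * μ := by
  have hs := rpow_le_one_of_bumpPhi_nonneg hz₀ h
  have hs₀ : 0 ≤ (y / z) ^ μ := by positivity
  nlinarith [mul_nonneg hμ (sub_nonneg.2 hs),
    mul_nonneg (mul_nonneg hμ hs₀) (sub_nonneg.2 hz₁.le)]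

theorem hasDerivAt_bumpPsi_fst (hμ : 0 < μ) (hy : 0 < y) (hz : 0 < z) :
    HasDerivAt (fun t => bumpPsi μ (t, z))
      (bumpStepDeriv (bumpPhi μ y z) * -((1 + z) * μ * (y / z) ^ μ / y)) y := by
  refine ((hasDerivAt_bumpStep _).comp y (hasDerivAt_bumpPhi_fst hy hz)).congr_of_eventuallyEq ?_
  filter_upwards [Ioi_mem_nhds hy] with t ht using bumpPsi_eq_bumpStep hμ (le_of_lt ht) hz

theorem hasDerivAt_bumpPsi_snd (hμ : 0 < μ) (hy : 0 < y) (hz : 0 < z) :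
    HasDerivAt (fun t => bumpPsi μ (y, t))
      (bumpStepDeriv (bumpPhi μ y z) * ((1 - (y / z) ^ μ) + (1 + z) * μ * (y / z) ^ μ / z)) z := by
  refine ((hasDerivAt_bumpStep _).comp z (hasDerivAt_bumpPhi_snd hy hz)).congr_of_eventuallyEq ?_
  filter_upwards [Ioi_mem_nhds hz] with t ht using bumpPsi_eq_bumpStep hμ hy.le ht

theorem abs_deriv_bumpPsi_fst_le (hμ : 0 < μ) (hz : z ∈ Ioo 0 1) (hy : 0 < y) :
    |deriv (fun t => bumpPsi μ (t, z)) y| ≤ 8 * μ / y := by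
  obtain ⟨hz₀, hz₁⟩ := hz
  rw [(hasDerivAt_bumpPsi_fst hμ hy hz₀).deriv]
  calc _ ≤ 4 * (2 * μ / y) := abs_bumpStepDeriv_mul_le (by positivity) fun hφ => ?_
    _ = 8 * μ / y := by ring
  rw [abs_neg, abs_of_nonneg (by positivity)]
  exact div_le_div_of_nonneg_right (mul_rpow_le_two_mul_of_bumpPhi_nonneg hμ.le hy.le hz₀ hz₁ hφ)
    hy.le

theorem abs_deriv_bumpPsi_snd_le (hμ : 0 < μ) (hz : z ∈ Ioo 0 1) (hy : 0 ≤ y) :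
    |deriv (fun t => bumpPsi μ (y, t)) z| ≤ 4 + 8 * μ / z := by
  obtain ⟨hz₀, hz₁⟩ := hz
  rcases hy.eq_or_lt with rfl | hy
  · have hone : (fun t => bumpPsi μ (0, t)) =ᶠ[𝓝 z] fun _ => 1 := by
      filter_upwards [Ioi_mem_nhds hz₀] with t ht
      simp [bumpPsi, bumpB_pos ht]
    rw [hone.deriv_eq, deriv_const, abs_zero]
    positivity
  rw [(hasDerivAt_bumpPsi_snd hμ hy hz₀).deriv]
  calc _ ≤ 4 * (1 + 2 * μ / z) := abs_bumpStepDeriv_mul_le (by positivity) fun hφ => ?_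
    _ = 4 + 8 * μ / z := by ring
  have hs := rpow_le_one_of_bumpPhi_nonneg hz₀ hφ
  have hs₀ : 0 ≤ (y / z) ^ μ := by positivity
  calc _ ≤ |1 - (y / z) ^ μ| + |(1 + z) * μ * (y / z) ^ μ / z| := abs_add_le _ _
    _ ≤ 1 + 2 * μ / z := by
      gcongr
      · rw [abs_le]
        constructor <;> linarith
      · rw [abs_of_nonneg (by positivity)]
        exact div_le_div_of_nonneg_right
          (mul_rpow_le_two_mul_of_bumpPhi_nonneg hμ.le hy.le hz₀ hz₁ hφ) hz₀.le

end bumpPsi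

/-- The explicit construction in the proof of the paper's bump-function lemma (Lemma 4.1):
(1) `0 < b(z) < z` with `φ(b(z),z) = 1` and `φ(z,z) = 0`;
(2) `ψ` is `C¹` on `[0,∞) × (0,1)` (it coincides there with a `C¹` function on an open
neighborhood) with values in `[0,1]`;
(3) `|∂ψ/∂y (y,z)| ≤ 8μ/y` for `y > 0`;
(4) `|∂ψ/∂z (y,z)| ≤ 4 + 8μ/z` for `y ≥ 0`. -/
theorem bumpPsi_properties (μ : ℝ) (hμ : 0 < μ) :
    (∀ z ∈ Ioo (0:ℝ) 1,
      0 < bumpB μ z ∧ bumpB μ z < z ∧ bumpPhi μ (bumpB μ z) z = 1 ∧ bumpPhi μ z z = 0) ∧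
    (∃ (U : Set (ℝ × ℝ)) (g : ℝ × ℝ → ℝ), IsOpen U ∧ (Ici (0:ℝ) ×ˢ Ioo (0:ℝ) 1) ⊆ U ∧
      ContDiffOn ℝ 1 g U ∧ ∀ p ∈ Ici (0:ℝ) ×ˢ Ioo (0:ℝ) 1, g p = bumpPsi μ p) ∧
    (∀ y ∈ Ici (0:ℝ), ∀ z ∈ Ioo (0:ℝ) 1, bumpPsi μ (y, z) ∈ Icc (0:ℝ) 1) ∧
    (∀ z ∈ Ioo (0:ℝ) 1, ∀ y, 0 < y →
      |deriv (fun t => bumpPsi μ (t, z)) y| ≤ 8 * μ / y) ∧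
    (∀ z ∈ Ioo (0:ℝ) 1, ∀ y, 0 ≤ y →
      |deriv (fun t => bumpPsi μ (y, t)) z| ≤ 4 + 8 * μ / z) :=
  ⟨fun _ hz =>
      ⟨bumpB_pos hz.1, bumpB_lt_self hμ hz.1, bumpPhi_bumpB hμ hz.1, bumpPhi_self hz.1.ne'⟩,
    ⟨univ ×ˢ Ioi 0, bumpPsi μ, isOpen_univ.prod isOpen_Ioi,
      prod_mono (subset_univ _) Ioo_subset_Ioi_self, contDiffOn_bumpPsi hμ, fun _ _ => rfl⟩,
    fun _ hy _ hz => bumpPsi_mem_Icc hμ hy hz.1,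
    fun _ hz _ hy => abs_deriv_bumpPsi_fst_le hμ hz hy,
    fun _ hz _ hy => abs_deriv_bumpPsi_snd_le hμ hz hy⟩
end

section
/- Let A ⊆ ℝⁿ be an open set and let f : cl(A) → ℝᵏ be continuous, where cl(A) denotes the closure of A. Suppose f is differentiable at every point of A with ‖Df(x)‖ ≤ K for all x ∈ A, and that f is L-Lipschitz on the topological boundary ∂A = cl(A) \ A. Then f is L′-Lipschitz on cl(A), where L′ = max(K, L). -/
open Set Filter Topology

/-- Extend a Lipschitz-type estimate from a set to a superset contained in its closure,
given continuity on the superset. -/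
lemma lip_extend_closure {E F : Type*} [NormedAddCommGroup E] [NormedAddCommGroup F]
    {f : E → F} {s t : Set E} (hst : s ⊆ t) (hts : t ⊆ closure s)
    (hf : ContinuousOn f t) {C : ℝ}
    (h : ∀ a ∈ s, ∀ b ∈ s, ‖f a - f b‖ ≤ C * ‖a - b‖) :
    ∀ a ∈ t, ∀ b ∈ t, ‖f a - f b‖ ≤ C * ‖a - b‖ := by
  intro a ha b hb
  have hab : (a, b) ∈ closure (s ×ˢ s) := by
    rw [closure_prod_eq]
    exact ⟨hts ha, hts hb⟩
  have hne : (𝓝[s ×ˢ s] (a, b)).NeBot := mem_closure_iff_nhdsWithin_neBot.1 hab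
  have hfst : Tendsto (fun p : E × E => p.1) (𝓝[s ×ˢ s] (a, b)) (𝓝[s] a) := by
    rw [nhdsWithin_prod_eq]; exact tendsto_fst
  have hsnd : Tendsto (fun p : E × E => p.2) (𝓝[s ×ˢ s] (a, b)) (𝓝[s] b) := by
    rw [nhdsWithin_prod_eq]; exact tendsto_snd
  have hfa : Tendsto (fun p : E × E => f p.1) (𝓝[s ×ˢ s] (a, b)) (𝓝 (f a)) :=
    ((hf a ha).mono hst).tendsto.comp hfst
  have hfb : Tendsto (fun p : E × E => f p.2) (𝓝[s ×ˢ s] (a, b)) (𝓝 (f b)) :=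
    ((hf b hb).mono hst).tendsto.comp hsnd
  have h1 : Tendsto (fun p : E × E => ‖f p.1 - f p.2‖) (𝓝[s ×ˢ s] (a, b))
      (𝓝 ‖f a - f b‖) := (hfa.sub hfb).norm
  have hida : Tendsto (fun p : E × E => p.1) (𝓝[s ×ˢ s] (a, b)) (𝓝 a) :=
    hfst.mono_right nhdsWithin_le_nhds
  have hidb : Tendsto (fun p : E × E => p.2) (𝓝[s ×ˢ s] (a, b)) (𝓝 b) :=
    hsnd.mono_right nhdsWithin_le_nhds
  have h2 : Tendsto (fun p : E × E => C * ‖p.1 - p.2‖) (𝓝[s ×ˢ s] (a, b))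
      (𝓝 (C * ‖a - b‖)) := ((hida.sub hidb).norm).const_mul C
  refine le_of_tendsto_of_tendsto h1 h2 ?_
  filter_upwards [self_mem_nhdsWithin] with p (hp : p ∈ s ×ˢ s)
  exact h p.1 hp.1 p.2 hp.2

/-- Mean-value estimate extended to endpoints in the closure: if the open segment
between `x` and `z` lies in the open set `A`, the derivative is bounded by `K` on `A`,
and `f` is continuous on `closure A`, with `x, z ∈ closure A`, then
`‖f x - f z‖ ≤ K * ‖x - z‖`. -/
lemma seg_estimate {E F : Type*} [NormedAddCommGroup E] [NormedSpace ℝ E]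
    [NormedAddCommGroup F] [NormedSpace ℝ F]
    {A : Set E} {f : E → F} (hf : ContinuousOn f (closure A)) {K : ℝ}
    (hdiff : ∀ x ∈ A, DifferentiableAt ℝ f x)
    (hK : ∀ x ∈ A, ‖fderiv ℝ f x‖ ≤ K)
    {x z : E} (hx : x ∈ closure A) (hz : z ∈ closure A)
    (hseg : openSegment ℝ x z ⊆ A) :
    ‖f x - f z‖ ≤ K * ‖x - z‖ := by
  rcases eq_or_ne x z with rfl | hxz
  · simp
  · have hopen : ∀ a ∈ openSegment ℝ x z, ∀ b ∈ openSegment ℝ x z,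
        ‖f a - f b‖ ≤ K * ‖a - b‖ := by
      intro a ha b hb
      exact (convex_openSegment x z).norm_image_sub_le_of_norm_fderiv_le
        (fun y hy => hdiff y (hseg hy)) (fun y hy => hK y (hseg hy)) hb ha
    have hsub : segment ℝ x z ⊆ closure A :=
      subset_trans segment_subset_closure_openSegment (closure_mono (hseg.trans subset_closure) |>.trans (by simp))
    have := lip_extend_closure (openSegment_subset_segment ℝ x z)
      segment_subset_closure_openSegment (hf.mono hsub) hopen
    exact this x (left_mem_segment ℝ x z) z (right_mem_segment ℝ x z)

/-- Observation 4.6 of the paper: if `A ⊆ ℝⁿ` is open, `f : cl(A) → ℝᵏ` is continuous,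
differentiable on `A` with `‖Df‖ ≤ K` there, and `L`-Lipschitz on the boundary
`∂A = cl(A) \ A`, then `f` is `max K L`-Lipschitz on `cl(A)`. -/
theorem lipschitz_on_closure_of_bounded_deriv_and_lipschitz_on_frontier
    {n k : ℕ} (A : Set (EuclideanSpace ℝ (Fin n))) (hA : IsOpen A)
    (f : EuclideanSpace ℝ (Fin n) → EuclideanSpace ℝ (Fin k))
    (hf : ContinuousOn f (closure A)) (K L : ℝ)
    (hdiff : ∀ x ∈ A, DifferentiableAt ℝ f x)
    (hK : ∀ x ∈ A, ‖fderiv ℝ f x‖ ≤ K)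
    (hL : ∀ x ∈ closure A \ A, ∀ y ∈ closure A \ A, ‖f x - f y‖ ≤ L * ‖x - y‖) :
    ∀ x ∈ closure A, ∀ y ∈ closure A, ‖f x - f y‖ ≤ max K L * ‖x - y‖ := by
  intro x hx y hy
  rcases eq_or_ne x y with rfl | hxy
  · simp
  set γ : ℝ → EuclideanSpace ℝ (Fin n) := fun t => x + t • (y - x) with hγdef
  have hγc : Continuous γ := by fun_prop
  have hγ0 : γ 0 = x := by simp [hγdef]
  have hγ1 : γ 1 = y := by simp [hγdef]
  set T : Set ℝ := {t | t ∈ Set.Ioo (0:ℝ) 1 ∧ γ t ∉ A} with hTdef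
  have hKmax : K ≤ max K L := le_max_left _ _
  have hLmax : L ≤ max K L := le_max_right _ _
  have hmemA : ∀ t ∈ Set.Ioo (0:ℝ) 1, t ∉ T → γ t ∈ A := by
    intro t ht htT
    by_contra h
    exact htT ⟨ht, h⟩
  -- description of open segments between points on the line
  have hseg_pt : ∀ θ a : ℝ, x + θ • (γ a - x) = γ (θ * a) := by
    intro θ a
    simp only [hγdef, add_sub_cancel_left, smul_smul]
  rcases Set.eq_empty_or_nonempty T with hTe | hTne
  · -- the whole open segment lies in A
    have hsub : openSegment ℝ x y ⊆ A := by
      intro p hp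
      rw [openSegment_eq_image'] at hp
      obtain ⟨θ, hθ, rfl⟩ := hp
      refine hmemA θ hθ fun h => ?_
      rw [hTe] at h; exact h
    have := seg_estimate hf hdiff hK hx hy hsub
    calc ‖f x - f y‖ ≤ K * ‖x - y‖ := this
      _ ≤ max K L * ‖x - y‖ := by
          exact mul_le_mul_of_nonneg_right hKmax (norm_nonneg _)
  · have hbddA : BddAbove T := ⟨1, fun t ht => ht.1.2.le⟩
    have hbddB : BddBelow T := ⟨0, fun t ht => ht.1.1.le⟩
    set a := sInf T with hadef
    set b := sSup T with hbdef
    have ha0 : 0 ≤ a := le_csInf hTne fun t ht => ht.1.1.le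
    have hb1 : b ≤ 1 := csSup_le hTne fun t ht => ht.1.2.le
    have hab : a ≤ b := by
      obtain ⟨t, ht⟩ := hTne
      exact (csInf_le hbddB ht).trans (le_csSup hbddA ht)
    have ha1 : a ≤ 1 := hab.trans hb1
    have hb0 : 0 ≤ b := ha0.trans hab
    -- γ a and γ b are not in A
    have hγaA : γ a ∉ A := by
      intro h
      have hU : γ ⁻¹' A ∈ nhds a := (hA.preimage hγc).mem_nhds h
      obtain ⟨ε, hε, hball⟩ := Metric.mem_nhds_iff.1 hU
      obtain ⟨t, htT, htlt⟩ := exists_lt_of_csInf_lt hTne (lt_add_of_pos_right a hε)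
      have hat : a ≤ t := csInf_le hbddB htT
      have : t ∈ Metric.ball a ε := by
        rw [Metric.mem_ball, Real.dist_eq, abs_of_nonneg (by linarith)]
        linarith
      exact htT.2 (hball this)
    have hγbA : γ b ∉ A := by
      intro h
      have hU : γ ⁻¹' A ∈ nhds b := (hA.preimage hγc).mem_nhds h
      obtain ⟨ε, hε, hball⟩ := Metric.mem_nhds_iff.1 hU
      obtain ⟨t, htT, htlt⟩ := exists_lt_of_lt_csSup hTne (sub_lt_self b hε)
      have hbt : t ≤ b := le_csSup hbddA htT
      have : t ∈ Metric.ball b ε := by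
        rw [Metric.mem_ball, Real.dist_eq, abs_of_nonpos (by linarith)]
        linarith
      exact htT.2 (hball this)
    -- γ a and γ b are in the closure of A
    have hγacl : γ a ∈ closure A := by
      rcases eq_or_lt_of_le ha0 with h0 | h0
      · rw [← h0, hγ0]; exact hx
      · have hne : (nhdsWithin a (Set.Ioo 0 a)).NeBot := by
          refine mem_closure_iff_nhdsWithin_neBot.1 ?_
          rw [closure_Ioo h0.ne]
          exact Set.mem_Icc.2 ⟨h0.le, le_refl a⟩
        refine mem_closure_of_tendsto
          ((hγc.tendsto a).mono_left (nhdsWithin_le_nhds (s := Set.Ioo 0 a))) ?_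
        filter_upwards [self_mem_nhdsWithin] with t (ht : t ∈ Set.Ioo 0 a)
        refine hmemA t ⟨ht.1, ht.2.trans_le ha1⟩ fun htT => ?_
        exact absurd (csInf_le hbddB htT) (not_le.2 ht.2)
    have hγbcl : γ b ∈ closure A := by
      rcases eq_or_lt_of_le hb1 with h1 | h1
      · rw [h1, hγ1]; exact hy
      · have hne : (nhdsWithin b (Set.Ioo b 1)).NeBot := by
          refine mem_closure_iff_nhdsWithin_neBot.1 ?_
          rw [closure_Ioo h1.ne]
          exact Set.mem_Icc.2 ⟨le_refl b, h1.le⟩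
        refine mem_closure_of_tendsto
          ((hγc.tendsto b).mono_left (nhdsWithin_le_nhds (s := Set.Ioo b 1))) ?_
        filter_upwards [self_mem_nhdsWithin] with t (ht : t ∈ Set.Ioo b 1)
        refine hmemA t ⟨hb0.trans_lt ht.1, ht.2⟩ fun htT => ?_
        exact absurd (le_csSup hbddA htT) (not_le.2 ht.1)
    -- the three estimates
    have est1 : ‖f x - f (γ a)‖ ≤ K * ‖x - γ a‖ := by
      rcases eq_or_lt_of_le ha0 with h0 | h0
      · rw [← h0, hγ0]; simp
      · refine seg_estimate hf hdiff hK hx hγacl ?_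
        intro p hp
        rw [openSegment_eq_image'] at hp
        obtain ⟨θ, hθ, rfl⟩ := hp
        show x + θ • (γ a - x) ∈ A
        rw [hseg_pt]
        have h1 : 0 < θ * a := mul_pos hθ.1 h0
        have h2 : θ * a < a := mul_lt_of_lt_one_left h0 hθ.2
        refine hmemA _ ⟨h1, h2.trans_le ha1⟩ fun htT => ?_
        exact absurd (csInf_le hbddB htT) (not_le.2 h2)
    have est3 : ‖f (γ b) - f y‖ ≤ K * ‖γ b - y‖ := by
      rcases eq_or_lt_of_le hb1 with h1 | h1
      · rw [h1, hγ1]; simp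
      · refine seg_estimate hf hdiff hK hγbcl hy ?_
        intro p hp
        rw [openSegment_eq_image'] at hp
        obtain ⟨θ, hθ, rfl⟩ := hp
        have hyb : y - γ b = (1 - b) • (y - x) := by
          simp [hγdef, sub_smul, one_smul]
          abel
        have : γ b + θ • (y - γ b) = γ (b + θ * (1 - b)) := by
          rw [hyb, smul_smul]
          simp [hγdef, add_smul]
          abel
        show γ b + θ • (y - γ b) ∈ A
        rw [this]
        have h1b : 0 < 1 - b := by linarith
        have ht1 : b < b + θ * (1 - b) := lt_add_of_pos_right _ (mul_pos hθ.1 h1b)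
        have ht2 : b + θ * (1 - b) < 1 := by nlinarith [hθ.2]
        refine hmemA _ ⟨hb0.trans_lt ht1, ht2⟩ fun htT => ?_
        exact absurd (le_csSup hbddA htT) (not_le.2 ht1)
    have est2 : ‖f (γ a) - f (γ b)‖ ≤ L * ‖γ a - γ b‖ :=
      hL (γ a) ⟨hγacl, hγaA⟩ (γ b) ⟨hγbcl, hγbA⟩
    -- norm computations
    have d0 : (0:ℝ) ≤ ‖x - y‖ := norm_nonneg _
    have hnxy : ‖y - x‖ = ‖x - y‖ := norm_sub_rev y x
    have n1 : ‖x - γ a‖ = a * ‖x - y‖ := by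
      have : x - γ a = (-a) • (y - x) := by simp [hγdef]
      rw [this, norm_smul, Real.norm_eq_abs, abs_neg, abs_of_nonneg ha0, hnxy]
    have n2 : ‖γ a - γ b‖ = (b - a) * ‖x - y‖ := by
      have : γ a - γ b = (a - b) • (y - x) := by
        simp [hγdef, sub_smul]
        try abel
      rw [this, norm_smul, Real.norm_eq_abs, abs_of_nonpos (by linarith), hnxy]
      ring
    have n3 : ‖γ b - y‖ = (1 - b) * ‖x - y‖ := by
      have : γ b - y = (b - 1) • (y - x) := by
        simp [hγdef, sub_smul, one_smul]
        abel
      rw [this, norm_smul, Real.norm_eq_abs, abs_of_nonpos (by linarith), hnxy]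
      ring
    have tri : ‖f x - f y‖ ≤ ‖f x - f (γ a)‖ + ‖f (γ a) - f (γ b)‖ + ‖f (γ b) - f y‖ := by
      calc ‖f x - f y‖ ≤ ‖f x - f (γ b)‖ + ‖f (γ b) - f y‖ := norm_sub_le_norm_sub_add_norm_sub _ _ _
        _ ≤ (‖f x - f (γ a)‖ + ‖f (γ a) - f (γ b)‖) + ‖f (γ b) - f y‖ := by
            gcongr
            exact norm_sub_le_norm_sub_add_norm_sub _ _ _
    rw [n1] at est1; rw [n2] at est2; rw [n3] at est3
    nlinarith [mul_nonneg (sub_nonneg.2 hKmax) (mul_nonneg ha0 d0),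
      mul_nonneg (sub_nonneg.2 hLmax) (mul_nonneg (by linarith : (0:ℝ) ≤ b - a) d0),
      mul_nonneg (sub_nonneg.2 hKmax) (mul_nonneg (by linarith : (0:ℝ) ≤ 1 - b) d0)]
end

section
/- Let A ⊆ ℝⁿ be a nonempty locally closed set and let ε : A → ℝ be continuous with 0 < ε(a) ≤ 1 for every a ∈ A. Define ε̃ on ℝⁿ by ε̃(x) = ε(x) for x ∈ A, and ε̃(x) = sup_{a ∈ A} ε(a)·d(x,A)/|a − x| for x ∉ A. Then the set W := A ∪ (ℝⁿ \ cl(A)) is a neighborhood of every point of A, and the restriction of ε̃ to W is positive and continuous. In particular, ε̃|_W is a positive continuous extension of ε to a neighborhood of A. -/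
open Set Metric Classical

noncomputable def rieszExt {n : ℕ} (A : Set (EuclideanSpace ℝ (Fin n)))
    (ε : EuclideanSpace ℝ (Fin n) → ℝ) (x : EuclideanSpace ℝ (Fin n)) : ℝ :=
  if x ∈ A then ε x
  else sSup ((fun a => ε a * Metric.infDist x A / ‖a - x‖) '' A)

section helpers
variable {n : ℕ} {A : Set (EuclideanSpace ℝ (Fin n))} {ε : EuclideanSpace ℝ (Fin n) → ℝ}

lemma infDist_le_norm' {a x : EuclideanSpace ℝ (Fin n)} (ha : a ∈ A) :
    Metric.infDist x A ≤ ‖a - x‖ := by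
  have := Metric.infDist_le_dist_of_mem (x := x) ha
  rwa [dist_eq_norm, norm_sub_rev] at this

lemma riesz_le_one (hle : ∀ a ∈ A, ε a ≤ 1)
    (x : EuclideanSpace ℝ (Fin n)) :
    ∀ z ∈ (fun a => ε a * Metric.infDist x A / ‖a - x‖) '' A, z ≤ 1 := by
  rintro z ⟨a, ha, rfl⟩
  rcases eq_or_ne ‖a - x‖ 0 with h | h
  · simp [h]
  · have hp : 0 < ‖a - x‖ := lt_of_le_of_ne (norm_nonneg _) (Ne.symm h)
    rw [div_le_one hp]
    calc ε a * Metric.infDist x A ≤ 1 * ‖a - x‖ :=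
          mul_le_mul (hle a ha) (infDist_le_norm' ha) Metric.infDist_nonneg zero_le_one
      _ = ‖a - x‖ := one_mul _

lemma riesz_bddAbove (hle : ∀ a ∈ A, ε a ≤ 1)
    (x : EuclideanSpace ℝ (Fin n)) :
    BddAbove ((fun a => ε a * Metric.infDist x A / ‖a - x‖) '' A) :=
  ⟨1, riesz_le_one hle x⟩

lemma term_lip (hpos : ∀ a ∈ A, 0 < ε a) (hle : ∀ a ∈ A, ε a ≤ 1)
    {c : ℝ} (hc : 0 < c) {x y : EuclideanSpace ℝ (Fin n)}
    (hdx : c ≤ Metric.infDist x A) (hdy : c ≤ Metric.infDist y A)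
    {a : EuclideanSpace ℝ (Fin n)} (ha : a ∈ A) :
    ε a * Metric.infDist x A / ‖a - x‖ ≤
      ε a * Metric.infDist y A / ‖a - y‖ + 2 / c * dist x y := by
  set dx := Metric.infDist x A with hdx'
  set dy := Metric.infDist y A with hdy'
  set p := ‖a - x‖ with hp'
  set q := ‖a - y‖ with hq'
  set t := dist x y with ht'
  have hp : dx ≤ p := infDist_le_norm' ha
  have hq : dy ≤ q := infDist_le_norm' ha
  have hp0 : 0 < p := lt_of_lt_of_le hc (le_trans hdx hp)
  have hq0 : 0 < q := lt_of_lt_of_le hc (le_trans hdy hq)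
  have ht : 0 ≤ t := dist_nonneg
  have hdxy : dx ≤ dy + t := Metric.infDist_le_infDist_add_dist
  have hqp : q ≤ p + t := by
    have h : a - y = (a - x) + (x - y) := by abel
    calc q = ‖(a - x) + (x - y)‖ := by rw [hq', h]
      _ ≤ ‖a - x‖ + ‖x - y‖ := norm_add_le _ _
      _ = p + t := by rw [ht', dist_eq_norm]
  have he0 : 0 ≤ ε a := (hpos a ha).le
  have he1 : ε a ≤ 1 := hle a ha
  have hd0 : 0 ≤ dx := Metric.infDist_nonneg
  have key : dx / p ≤ dy / q + 2 / c * t := by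
    have h1 : dx * q ≤ dy * p + 2 * p * t := by nlinarith
    have h2 : dx / p ≤ (dy * p + 2 * p * t) / (p * q) := by
      rw [div_le_div_iff₀ hp0 (by positivity)]
      nlinarith
    have h3 : (dy * p + 2 * p * t) / (p * q) = dy / q + 2 * t / q := by
      field_simp
    have h4 : 2 * t / q ≤ 2 / c * t := by
      have hcq : c ≤ q := le_trans hdy hq
      have h : 2 * t / q ≤ 2 * t / c := by gcongr
      calc 2 * t / q ≤ 2 * t / c := h
        _ = 2 / c * t := by ring
    linarith [h2, h3 ▸ h2]
  have h5 : ε a * (dx / p) ≤ ε a * (dy / q + 2 / c * t) :=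
    mul_le_mul_of_nonneg_left key he0
  have h6 : ε a * (2 / c * t) ≤ 2 / c * t := by
    have h7 : 0 ≤ 2 / c * t := by positivity
    nlinarith
  rw [mul_div_assoc, mul_div_assoc]
  nlinarith [h5, h6]

lemma sup_lip (hne : A.Nonempty) (hpos : ∀ a ∈ A, 0 < ε a) (hle : ∀ a ∈ A, ε a ≤ 1)
    {c : ℝ} (hc : 0 < c) {x y : EuclideanSpace ℝ (Fin n)}
    (hdx : c ≤ Metric.infDist x A) (hdy : c ≤ Metric.infDist y A) :
    sSup ((fun a => ε a * Metric.infDist x A / ‖a - x‖) '' A) ≤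
      sSup ((fun a => ε a * Metric.infDist y A / ‖a - y‖) '' A) + 2 / c * dist x y := by
  apply csSup_le (hne.image _)
  rintro z ⟨a, ha, rfl⟩
  have h1 := term_lip hpos hle hc hdx hdy ha
  have h2 : ε a * Metric.infDist y A / ‖a - y‖ ≤
      sSup ((fun a => ε a * Metric.infDist y A / ‖a - y‖) '' A) :=
    le_csSup (riesz_bddAbove hle y) (mem_image_of_mem _ ha)
  linarith

end helpers

/-- The Riesz extension formula used in the paper's proof of Corollary 4.9: if `A ⊆ ℝⁿ` is
nonempty, locally closed, and `ε : A → (0,1]` is continuous, then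
`W := A ∪ (ℝⁿ \ cl A)` is a neighborhood of every point of `A` and `ε̃` restricted to `W`
is a positive continuous extension of `ε`. -/
theorem rieszExt_continuous_positive {n : ℕ} (A : Set (EuclideanSpace ℝ (Fin n)))
    (hne : A.Nonempty) (hA : IsLocallyClosed A)
    (ε : EuclideanSpace ℝ (Fin n) → ℝ) (hε : ContinuousOn ε A)
    (hpos : ∀ a ∈ A, 0 < ε a) (hle : ∀ a ∈ A, ε a ≤ 1) :
    (∀ x ∈ A, A ∪ (closure A)ᶜ ∈ nhds x) ∧
    ContinuousOn (rieszExt A ε) (A ∪ (closure A)ᶜ) ∧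
    (∀ x ∈ A ∪ (closure A)ᶜ, 0 < rieszExt A ε x) := by
  obtain ⟨U, Z, hU, hZ, hAZ⟩ := hA
  have hclZ : closure A ⊆ Z := closure_minimal (hAZ ▸ inter_subset_right) hZ
  have hUW : U ⊆ A ∪ (closure A)ᶜ := by
    intro y hy
    by_cases hyc : y ∈ closure A
    · exact Or.inl (hAZ ▸ ⟨hy, hclZ hyc⟩)
    · exact Or.inr hyc
  have hnbhd : ∀ x ∈ A, A ∪ (closure A)ᶜ ∈ nhds x := fun x hx =>
    Filter.mem_of_superset (hU.mem_nhds (hAZ ▸ hx).1) hUW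
  have hW_notMem : ∀ x ∈ A ∪ (closure A)ᶜ, x ∉ A → x ∉ closure A := by
    intro x hx hxA
    rcases hx with h | h
    · exact absurd h hxA
    · exact h
  have hinf_pos : ∀ x : EuclideanSpace ℝ (Fin n), x ∉ closure A → 0 < Metric.infDist x A := by
    intro x hx
    have h := (isClosed_closure.notMem_iff_infDist_pos (hne.mono subset_closure)).mp hx
    rwa [Metric.infDist_closure] at h
  have hposW : ∀ x ∈ A ∪ (closure A)ᶜ, 0 < rieszExt A ε x := by
    intro x hx
    by_cases hxA : x ∈ A
    · simp only [rieszExt, if_pos hxA]; exact hpos x hxA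
    · have hxc : x ∉ closure A := hW_notMem x hx hxA
      simp only [rieszExt, if_neg hxA]
      obtain ⟨a, ha⟩ := hne
      have hd : 0 < Metric.infDist x A := hinf_pos x hxc
      have hax : 0 < ‖a - x‖ := by
        rw [norm_pos_iff, sub_ne_zero]
        rintro rfl; exact hxA ha
      have hterm : 0 < ε a * Metric.infDist x A / ‖a - x‖ :=
        div_pos (mul_pos (hpos a ha) hd) hax
      exact lt_of_lt_of_le hterm
        (le_csSup (riesz_bddAbove hle x) (mem_image_of_mem _ ha))
  refine ⟨hnbhd, ?_, hposW⟩
  intro x0 hx0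
  by_cases hx0A : x0 ∈ A
  · -- continuity at a point of A
    rw [Metric.continuousWithinAt_iff]
    intro δ hδ
    have hε0pos := hpos x0 hx0A
    have hε0le := hle x0 hx0A
    set δ' := min (δ / 4) (ε x0) with hδ'def
    have hδ'pos : 0 < δ' := lt_min (by linarith) hε0pos
    have hδ'le : δ' ≤ δ / 4 := min_le_left _ _
    have hδ'ε : δ' ≤ ε x0 := min_le_right _ _
    obtain ⟨ρ, hρ, hρ'⟩ := Metric.continuousWithinAt_iff.mp (hε x0 hx0A) δ' hδ'pos
    set η := min (ρ / 4) (δ * ρ / 8) with hηdef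
    have hη : 0 < η := lt_min (by linarith) (by positivity)
    have hη4 : η ≤ ρ / 4 := min_le_left _ _
    have hη8 : η ≤ δ * ρ / 8 := min_le_right _ _
    refine ⟨η, hη, ?_⟩
    intro x hxW hxd
    have hfx0 : rieszExt A ε x0 = ε x0 := if_pos hx0A
    by_cases hxA : x ∈ A
    · have h := hρ' hxA (by linarith : dist x x0 < ρ)
      simp only [rieszExt, if_pos hxA, if_pos hx0A]
      calc dist (ε x) (ε x0) < δ' := h
        _ ≤ δ / 4 := hδ'le
        _ < δ := by linarith
    · have hxc : x ∉ closure A := hW_notMem x hxW hxA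
      have hd : 0 < Metric.infDist x A := hinf_pos x hxc
      have hdlt : Metric.infDist x A < η :=
        lt_of_le_of_lt (Metric.infDist_le_dist_of_mem hx0A) hxd
      simp only [rieszExt, if_neg hxA, if_pos hx0A]
      rw [Real.dist_eq, abs_sub_lt_iff]
      have hub : sSup ((fun a => ε a * Metric.infDist x A / ‖a - x‖) '' A) ≤ ε x0 + δ / 2 := by
        apply csSup_le (hne.image _)
        rintro z ⟨a, ha, rfl⟩
        simp only
        have hax : 0 < ‖a - x‖ := by
          rw [norm_pos_iff, sub_ne_zero]; rintro rfl; exact hxA ha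
        by_cases haρ : dist a x0 < ρ
        · have h1 := hρ' ha haρ
          rw [Real.dist_eq, abs_sub_lt_iff] at h1
          have h3 : ε a * Metric.infDist x A / ‖a - x‖ ≤ ε a := by
            rw [mul_div_assoc]
            have hdp : Metric.infDist x A / ‖a - x‖ ≤ 1 :=
              div_le_one_of_le₀ (infDist_le_norm' ha) (norm_nonneg _)
            nlinarith [hpos a ha, div_nonneg (Metric.infDist_nonneg (s := A) (x := x)) (norm_nonneg (a - x))]
          linarith [h1.1, hδ'le]
        · push_neg at haρ
          have htri : dist a x0 ≤ dist a x + dist x x0 := dist_triangle _ _ _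
          have hdax : dist a x = ‖a - x‖ := dist_eq_norm _ _
          have hax2 : ρ / 2 ≤ ‖a - x‖ := by linarith
          have h4 : ε a * Metric.infDist x A / ‖a - x‖ ≤ Metric.infDist x A / ‖a - x‖ := by
            rw [mul_div_assoc]
            exact mul_le_of_le_one_left
              (div_nonneg Metric.infDist_nonneg (norm_nonneg _)) (hle a ha)
          have h5 : Metric.infDist x A / ‖a - x‖ ≤ η / (ρ / 2) :=
            div_le_div₀ hη.le hdlt.le (by linarith) hax2
          have h6 : η / (ρ / 2) ≤ δ / 4 := by
            rw [div_le_iff₀ (by linarith : (0:ℝ) < ρ / 2)]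
            linarith
          linarith
      have hlb : ε x0 - δ / 2 ≤ sSup ((fun a => ε a * Metric.infDist x A / ‖a - x‖) '' A) := by
        set d := Metric.infDist x A with hddef
        set μ := min η (δ' * d) with hμdef
        have hμ : 0 < μ := lt_min hη (by positivity)
        have hμη : μ ≤ η := min_le_left _ _
        have hμd : μ ≤ δ' * d := min_le_right _ _
        obtain ⟨a, ha, hdist⟩ := (Metric.infDist_lt_iff hne).mp
          (show Metric.infDist x A < d + μ by simp only [← hddef]; linarith)
        have haq : ‖a - x‖ = dist x a := by rw [dist_eq_norm, norm_sub_rev]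
        have hax0 : dist a x0 < ρ := by
          have t1 : dist a x0 ≤ dist a x + dist x x0 := dist_triangle _ _ _
          have t2 : dist a x = dist x a := dist_comm _ _
          linarith
        have hεa : ε x0 - δ' < ε a := by
          have h := hρ' ha hax0
          rw [Real.dist_eq, abs_sub_lt_iff] at h
          linarith [h.2]
        have hp : 0 < ‖a - x‖ := by
          rw [norm_pos_iff, sub_ne_zero]; rintro rfl; exact hxA ha
        have hple : ‖a - x‖ ≤ d * (1 + δ') := by
          rw [haq]; nlinarith
        have step1 : (ε x0 - δ') * (d / ‖a - x‖) ≤ ε a * d / ‖a - x‖ := by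
          rw [mul_div_assoc]
          exact mul_le_mul_of_nonneg_right hεa.le (div_nonneg hd.le hp.le)
        have step2 : (ε x0 - δ') * (1 / (1 + δ')) ≤ (ε x0 - δ') * (d / ‖a - x‖) := by
          apply mul_le_mul_of_nonneg_left ?_ (by linarith)
          rw [div_le_div_iff₀ (by linarith : (0:ℝ) < 1 + δ') hp]
          linarith [hple]
        have step3 : ε x0 - 2 * δ' ≤ (ε x0 - δ') * (1 / (1 + δ')) := by
          rw [mul_one_div, le_div_iff₀ (by linarith : (0:ℝ) < 1 + δ')]
          nlinarith
        have step4 : ε a * d / ‖a - x‖ ≤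
            sSup ((fun a => ε a * Metric.infDist x A / ‖a - x‖) '' A) := by
          rw [hddef]
          exact le_csSup (riesz_bddAbove hle x) (mem_image_of_mem _ ha)
        linarith
      constructor <;> linarith
  · -- continuity away from the closure
    have hx0c : x0 ∉ closure A := hW_notMem x0 hx0 hx0A
    have hr : 0 < Metric.infDist x0 A := hinf_pos x0 hx0c
    set r := Metric.infDist x0 A with hrdef
    rw [Metric.continuousWithinAt_iff]
    intro δ hδ
    set K := 2 / (r / 2) with hKdef
    have hK0 : 0 < K := by positivity
    refine ⟨min (r / 2) (δ / (K + 1)), lt_min (by linarith) (by positivity), ?_⟩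
    intro x hxW hxd
    have hxd1 : dist x x0 < r / 2 := lt_of_lt_of_le hxd (min_le_left _ _)
    have hxd2 : dist x x0 < δ / (K + 1) := lt_of_lt_of_le hxd (min_le_right _ _)
    have hdx : r / 2 ≤ Metric.infDist x A := by
      have t1 : r ≤ Metric.infDist x A + dist x0 x := Metric.infDist_le_infDist_add_dist
      have t2 : dist x0 x = dist x x0 := dist_comm _ _
      linarith
    have hxA : x ∉ A := by
      intro h
      have h0 := Metric.infDist_zero_of_mem h
      rw [h0] at hdx; linarith
    simp only [rieszExt, if_neg hxA, if_neg hx0A]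
    rw [Real.dist_eq, abs_sub_lt_iff]
    have hdx0 : r / 2 ≤ Metric.infDist x0 A := by linarith
    have l1 := sup_lip hne hpos hle (show (0:ℝ) < r / 2 by linarith) hdx hdx0
    have l2 := sup_lip hne hpos hle (show (0:ℝ) < r / 2 by linarith) hdx0 hdx
    rw [dist_comm x0 x] at l2
    have hKd : K * dist x x0 < δ := by
      rw [lt_div_iff₀ (by linarith : (0:ℝ) < K + 1)] at hxd2
      nlinarith [dist_nonneg (x := x) (y := x0)]
    rw [← hKdef] at l1 l2
    constructor <;> linarith
end
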